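/- Let 𝔤 be a finite-dimensional real 2-step nilpotent Lie algebra, let u ∈ L¹([0,1],𝔤), and let γ : [0,1] → 𝔤 be an absolutely continuous curve with γ(0) = 0 and γ'(t) = u(t) + (1/2)⁅γ(t), u(t)⁆ for a.e. t ∈ [0,1] (i.e. γ is the horizontal curve with control u in the model group (𝔤,∗)). Then γ(1) = ∫₀¹ u(t) dt + (1/2)∫₀¹ ⁅∫₀ᵗ u(s) ds, u(t)⁆ dt. -/
import Mathlib


open MeasureTheory

/-- The endpoint of the horizontal curve with control `u` in the 2-step model group `(𝔤,∗)`: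
`E(u) = ∫₀¹ u + (1/2)∫₀¹ ⁅∫₀ᵗ u, u(t)⁆ dt`. -/
noncomputable def endpointMap {L : Type*} [NormedAddCommGroup L] [NormedSpace ℝ L]
    (bracket : L →ₗ[ℝ] L →ₗ[ℝ] L) (u : ℝ → L) : L :=
  (∫ t in (0:ℝ)..1, u t) +
    (2⁻¹ : ℝ) • ∫ t in (0:ℝ)..1, bracket (∫ s in (0:ℝ)..t, u s) (u t)

/-- if `γ` is the absolutely continuous horizontal curve with control
`u ∈ L¹([0,1],𝔤)`, i.e. `γ(t) = ∫₀ᵗ (u(s) + (1/2)⁅γ(s),u(s)⁆) ds` (the integral form of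
`γ(0)=0`, `γ'(t) = u(t) + (1/2)⁅γ(t),u(t)⁆` a.e.), then
`γ(1) = ∫₀¹ u + (1/2)∫₀¹ ⁅∫₀ᵗ u, u(t)⁆ dt`. -/
theorem stmt_0 {L : Type*} [NormedAddCommGroup L] [NormedSpace ℝ L] [FiniteDimensional ℝ L]
    (bracket : L →ₗ[ℝ] L →ₗ[ℝ] L)
    (halt : ∀ x : L, bracket x x = 0)
    (h2step : ∀ x y z : L, bracket (bracket x y) z = 0)
    (u γ : ℝ → L)
    (hu : IntervalIntegrable u volume 0 1)
    (hγ0 : γ 0 = 0)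
    (hγ : ∀ t ∈ Set.Icc (0:ℝ) 1,
      γ t = ∫ s in (0:ℝ)..t, (u s + (2⁻¹ : ℝ) • bracket (γ s) (u s))) :
    γ 1 = endpointMap bracket u := by
  have h01 : (0:ℝ) ≤ 1 := by norm_num
  set ψ : ℝ → L := fun s => bracket (γ s) (u s) with hψdef
  set v : ℝ → L := fun t => ∫ s in (0:ℝ)..t, u s with hvdef
  set g : ℝ → L := fun s => bracket (v s) (u s) with hgdef
  -- integrability of u on subintervals
  have husub : ∀ s ∈ Set.Icc (0:ℝ) 1, IntervalIntegrable u volume 0 s := by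
    intro s hs
    refine hu.mono_set ?_
    rw [Set.uIcc_of_le hs.1, Set.uIcc_of_le h01]
    exact Set.Icc_subset_Icc le_rfl hs.2
  -- A1 : if ψ is integrable on [0,s] then ψ s = g s
  have A1 : ∀ s ∈ Set.Icc (0:ℝ) 1, IntervalIntegrable ψ volume 0 s → ψ s = g s := by
    intro s hs hint
    have hγs : γ s = v s + (2⁻¹ : ℝ) • ∫ r in (0:ℝ)..s, ψ r := by
      rw [hγ s hs, ← intervalIntegral.integral_smul]
      exact intervalIntegral.integral_add (husub s hs) (hint.smul _)
    have hzero : bracket (∫ r in (0:ℝ)..s, ψ r) (u s) = 0 := by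
      set φ : L →L[ℝ] L := LinearMap.toContinuousLinearMap (bracket.flip (u s)) with hφ
      have h1 : bracket (∫ r in (0:ℝ)..s, ψ r) (u s) = φ (∫ r in (0:ℝ)..s, ψ r) := rfl
      rw [h1, ← ContinuousLinearMap.intervalIntegral_comp_comm φ hint]
      have h2 : ∀ r, φ (ψ r) = 0 := by
        intro r
        show bracket (bracket (γ r) (u r)) (u s) = 0
        exact h2step _ _ _
      simp [h2]
    show bracket (γ s) (u s) = g s
    rw [hγs]
    have hsplit : bracket (v s + (2⁻¹ : ℝ) • ∫ r in (0:ℝ)..s, ψ r) (u s)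
        = bracket (v s) (u s) + (2⁻¹ : ℝ) • bracket (∫ r in (0:ℝ)..s, ψ r) (u s) := by
      simp
    rw [hsplit, hzero, smul_zero, add_zero]
  -- A2 : if ψ is not integrable on [0,s] then ψ s = 0
  have A2 : ∀ s ∈ Set.Icc (0:ℝ) 1, ¬ IntervalIntegrable ψ volume 0 s → ψ s = 0 := by
    intro s hs hnint
    have hF : ¬ IntervalIntegrable (fun r => u r + (2⁻¹ : ℝ) • bracket (γ r) (u r)) volume 0 s := by
      intro h
      apply hnint
      have h2 : IntervalIntegrable
          (fun r => (2:ℝ) • ((u r + (2⁻¹ : ℝ) • bracket (γ r) (u r)) - u r)) volume 0 s :=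
        (h.sub (husub s hs)).smul _
      have h3 : (fun r => (2:ℝ) • ((u r + (2⁻¹ : ℝ) • bracket (γ r) (u r)) - u r)) = ψ := by
        funext r
        simp [hψdef, smul_smul]
      rwa [h3] at h2
    have hγs : γ s = 0 := by rw [hγ s hs, intervalIntegral.integral_undef hF]
    show bracket (γ s) (u s) = 0
    rw [hγs, map_zero, LinearMap.zero_apply]
  -- the continuous bilinear version of the bracket
  set Bc : L →L[ℝ] L →L[ℝ] L :=
    LinearMap.toContinuousLinearMap
      ((LinearMap.toContinuousLinearMap : (L →ₗ[ℝ] L) ≃ₗ[ℝ] (L →L[ℝ] L)).toLinearMap ∘ₗ bracket)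
    with hBc
  have hBcapp : ∀ x y : L, Bc x y = bracket x y := fun x y => rfl
  -- v is continuous on [0,1]
  have huIcc : IntegrableOn u (Set.Icc (0:ℝ) 1) volume := by
    rw [integrableOn_Icc_iff_integrableOn_Ioc]
    exact (intervalIntegrable_iff_integrableOn_Ioc_of_le h01).mp hu
  have hvc : ContinuousOn v (Set.Icc (0:ℝ) 1) := by
    have := intervalIntegral.continuousOn_primitive_interval
      (a := (0:ℝ)) (b := 1) (μ := volume) (f := u) (by rwa [Set.uIcc_of_le h01])
    rwa [Set.uIcc_of_le h01] at this
  obtain ⟨C, hC⟩ := isCompact_Icc.exists_bound_of_continuousOn hvc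
  -- g is interval integrable on [0,1]
  have huIoc : IntegrableOn u (Set.Ioc (0:ℝ) 1) volume :=
    (intervalIntegrable_iff_integrableOn_Ioc_of_le h01).mp hu
  have hgmeas : AEStronglyMeasurable g (volume.restrict (Set.Ioc (0:ℝ) 1)) := by
    have hum : AEStronglyMeasurable u (volume.restrict (Set.Ioc (0:ℝ) 1)) :=
      huIoc.aestronglyMeasurable
    have hvm : AEStronglyMeasurable v (volume.restrict (Set.Ioc (0:ℝ) 1)) :=
      ((hvc.mono Set.Ioc_subset_Icc_self).aestronglyMeasurable measurableSet_Ioc)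
    have hcont : Continuous (fun p : L × L => Bc p.1 p.2) := Bc.continuous₂
    have : AEStronglyMeasurable (fun s => Bc (v s) (u s))
        (volume.restrict (Set.Ioc (0:ℝ) 1)) :=
      hcont.comp_aestronglyMeasurable (hvm.prodMk hum)
    simpa [hgdef, hBcapp] using this
  have hgIoc : IntegrableOn g (Set.Ioc (0:ℝ) 1) volume := by
    refine Integrable.mono' ((huIoc.norm.const_mul (‖Bc‖ * C))) hgmeas ?_
    refine (ae_restrict_iff' measurableSet_Ioc).mpr (Filter.Eventually.of_forall ?_)
    intro s hs
    have hs' : s ∈ Set.Icc (0:ℝ) 1 := Set.Ioc_subset_Icc_self hs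
    have h1 : ‖g s‖ = ‖Bc (v s) (u s)‖ := by rw [hBcapp]
    rw [h1, mul_assoc]
    calc ‖Bc (v s) (u s)‖ ≤ ‖Bc‖ * ‖v s‖ * ‖u s‖ := Bc.le_opNorm₂ _ _
      _ ≤ ‖Bc‖ * (C * ‖u s‖) := by
          rw [mul_assoc]
          exact mul_le_mul_of_nonneg_left
            (mul_le_mul_of_nonneg_right (hC s hs') (norm_nonneg _)) Bc.opNorm_nonneg
  have hg_int : IntervalIntegrable g volume 0 1 :=
    (intervalIntegrable_iff_integrableOn_Ioc_of_le h01).mpr hgIoc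
  -- the set where ψ is integrable is order-connected, hence measurable
  set T : Set ℝ := {s | s ∈ Set.Icc (0:ℝ) 1 ∧ IntervalIntegrable ψ volume 0 s} with hT
  have hTord : T.OrdConnected := by
    constructor
    intro x hx y hy z hz
    have hz1 : z ∈ Set.Icc (0:ℝ) 1 := ⟨le_trans hx.1.1 hz.1, le_trans hz.2 hy.1.2⟩
    refine ⟨hz1, hy.2.mono_set ?_⟩
    rw [Set.uIcc_of_le hz1.1, Set.uIcc_of_le hy.1.1]
    exact Set.Icc_subset_Icc le_rfl hz.2
  have hTmeas : MeasurableSet T := hTord.measurableSet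
  -- ψ is interval integrable on [0,1]
  have hψ_int : IntervalIntegrable ψ volume 0 1 := by
    rw [intervalIntegrable_iff_integrableOn_Ioc_of_le h01]
    refine (hgIoc.indicator hTmeas).congr_fun ?_ measurableSet_Ioc
    intro s hs
    have hs' : s ∈ Set.Icc (0:ℝ) 1 := Set.Ioc_subset_Icc_self hs
    by_cases hsT : s ∈ T
    · rw [Set.indicator_of_mem hsT]
      exact (A1 s hs' hsT.2).symm
    · rw [Set.indicator_of_notMem hsT]
      have : ¬ IntervalIntegrable ψ volume 0 s := fun h => hsT ⟨hs', h⟩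
      exact (A2 s hs' this).symm
  -- hence ψ = g on all of [0,1]
  have hψg : ∀ s ∈ Set.Icc (0:ℝ) 1, ψ s = g s := by
    intro s hs
    refine A1 s hs (hψ_int.mono_set ?_)
    rw [Set.uIcc_of_le hs.1, Set.uIcc_of_le h01]
    exact Set.Icc_subset_Icc le_rfl hs.2
  -- conclude
  have hfinal : γ 1 = v 1 + (2⁻¹ : ℝ) • ∫ t in (0:ℝ)..1, ψ t := by
    rw [hγ 1 (by norm_num), ← intervalIntegral.integral_smul]
    exact intervalIntegral.integral_add hu (hψ_int.smul _)
  rw [hfinal]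
  have : (∫ t in (0:ℝ)..1, ψ t) = ∫ t in (0:ℝ)..1, g t := by
    apply intervalIntegral.integral_congr
    rw [Set.uIcc_of_le h01]
    exact hψg
  rw [this]
  rfl
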